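/- arXiv:1312.3182 — 2 statements merged into one kernel-verified Lean document; each statement's English description precedes it below -/
import Mathlib

section
/- In a connected block graph G with blocks B_1,…,B_r, a set A ⊆ V(G) is a center set (i.e., A = C_S(G) for some nonempty S ⊆ V(G)) if and only if A is a singleton {v} for some vertex v, or A = V(B_i) for some block B_i. -/
/-- The `S`-eccentricity of a vertex `v`. -/
noncomputable def sEcc {V : Type*} (G : SimpleGraph V) (S : Finset V) (v : V) : ℕ :=
  S.sup fun x => G.dist v x

/-- The `S`-center of `G`. -/
noncomputable def sCenter {V : Type*} (G : SimpleGraph V) (S : Finset V) : Set V :=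
  {v | ∀ w, sEcc G S v ≤ sEcc G S w}

/-- `A` is a center set of `G` if it is the `S`-center for some nonempty set `S`. -/
def IsCenterSet {V : Type*} (G : SimpleGraph V) (A : Set V) : Prop :=
  ∃ S : Finset V, S.Nonempty ∧ sCenter G S = A

/-- `B` induces a connected subgraph of `G` without a cut-vertex. -/
def IsCutFree {V : Type*} (G : SimpleGraph V) (B : Set V) : Prop :=
  B.Nonempty ∧ (G.induce B).Connected ∧ ∀ v ∈ B, (G.induce (B \ {v})).Preconnected

/-- A block of `G`: a maximal set of vertices inducing a connected subgraph with no
cut-vertex. -/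
def IsBlock {V : Type*} (G : SimpleGraph V) (B : Set V) : Prop :=
  IsCutFree G B ∧ ∀ B', B ⊆ B' → IsCutFree G B' → B' = B


/-!
Everything rests on one property of block graphs: two walks between distinct vertices `u` and `v`
that meet only at their ends force `u` and `v` to be adjacent, because the union of the two
paths they contain has no cut-vertex and hence lies in a block, which is complete. By induction
on distances this makes distances to any vertex `x` behave as in a tree: if `w` is the neighbour
of `u` on a shortest `u`-`v` path and `w ≠ v`, then `d w x < max (d u x) (d v x)`, and a vertex of
a triangle `u v w` satisfies `d w x ≤ max (d u x) (d v x)`. The first inequality shows that the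
`S`-center is a clique, the second that no other vertex of the block containing it has larger
`S`-eccentricity. Conversely, a vertex is the center of itself, and a block with at least two
vertices is the center of its own vertex set: its vertices have eccentricity `1`, every other
vertex eccentricity at least `2`, by maximality of the block.
-/

open SimpleGraph

namespace SimpleGraph

variable {V : Type*} {G : SimpleGraph V} {u v : V}

lemma Walk.dist_add_dist_of_mem_support {p : G.Walk u v} (hp : p.length = G.dist u v) {z : V}
    (hz : z ∈ p.support) : G.dist u z + G.dist z v = G.dist u v := by
  classical
  rw [← length_eq_dist_of_subwalk hp (p.isSubwalk_takeUntil hz),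
    ← length_eq_dist_of_subwalk hp (p.isSubwalk_dropUntil hz), ← hp, ← Walk.length_append,
    p.take_spec hz]

lemma Walk.IsPath.notMem_support_takeUntil_or_dropUntil [DecidableEq V] {P : G.Walk u v}
    (hP : P.IsPath) {a z : V} (ha : a ∈ P.support) (hza : z ≠ a) :
    z ∉ (P.takeUntil a ha).support ∨ z ∉ (P.dropUntil a ha).support := by
  rw [← not_and_or]
  rintro ⟨hzt, hzd⟩
  have hP' : ((P.takeUntil a ha).append (P.dropUntil a ha)).IsPath := by rwa [P.take_spec ha]
  exact hP'.ne_of_mem_support_of_append hza hzt hzd rfl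

lemma Walk.IsPath.reachable_induce_diff_singleton {P : G.Walk u v} (hP : P.IsPath) {s : Set V}
    (hs : ∀ x ∈ P.support, x ∈ s) {z a : V} (has : a ∈ s \ {z}) (ha : a ∈ P.support) :
    (∃ hu : u ∈ s \ {z}, (G.induce (s \ {z})).Reachable ⟨u, hu⟩ ⟨a, has⟩) ∨
      (∃ hv : v ∈ s \ {z}, (G.induce (s \ {z})).Reachable ⟨v, hv⟩ ⟨a, has⟩) := by
  classical
  have hsub : ∀ {b c : V} (p : G.Walk b c), p.support ⊆ P.support → z ∉ p.support →
      ∀ x ∈ p.support, x ∈ s \ {z} := fun p hpP hz x hx =>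
    ⟨hs x (hpP hx), fun hxz => hz (Set.mem_singleton_iff.mp hxz ▸ hx)⟩
  rcases hP.notMem_support_takeUntil_or_dropUntil ha fun hza => has.2 hza.symm with hz | hz
  · exact .inl ⟨_, ((P.takeUntil a ha).induce _
      (hsub _ (P.support_takeUntil_subset_support ha) hz)).reachable⟩
  · have hz' : z ∉ (P.dropUntil a ha).reverse.support := by simpa using hz
    have hsub' : (P.dropUntil a ha).reverse.support ⊆ P.support := by
      simpa using P.support_dropUntil_subset_support ha
    exact .inr ⟨_, ((P.dropUntil a ha).reverse.induce _ (hsub _ hsub' hz')).reachable⟩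

lemma Walk.isCutFree_support_union {P Q : G.Walk u v} (hP : P.IsPath) (hQ : Q.IsPath)
    (hPQ : ∀ z ∈ P.support, z ∈ Q.support → z = u ∨ z = v) :
    IsCutFree G ({x | x ∈ P.support} ∪ {x | x ∈ Q.support}) := by
  set W : Set V := {x | x ∈ P.support} ∪ {x | x ∈ Q.support}
  have hPW : ∀ x ∈ P.support, x ∈ W := fun x hx => Or.inl hx
  have hQW : ∀ x ∈ Q.support, x ∈ W := fun x hx => Or.inr hx
  refine ⟨⟨u, hPW u P.start_mem_support⟩,
    induce_union_connected P.connected_induce_support.preconnected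
      Q.connected_induce_support.preconnected ⟨u, P.start_mem_support, Q.start_mem_support⟩,
    fun z _ => ?_⟩
  have hend : ∀ a : ↥(W \ {z}),
      (∃ hu : u ∈ W \ {z}, (G.induce (W \ {z})).Reachable ⟨u, hu⟩ a) ∨
        (∃ hv : v ∈ W \ {z}, (G.induce (W \ {z})).Reachable ⟨v, hv⟩ a) := fun ⟨a, ha⟩ =>
    ha.1.elim (hP.reachable_induce_diff_singleton hPW ha)
      (hQ.reachable_induce_diff_singleton hQW ha)
  have huv : ∀ (hu : u ∈ W \ {z}) (hv : v ∈ W \ {z}),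
      (G.induce (W \ {z})).Reachable ⟨u, hu⟩ ⟨v, hv⟩ := by
    intro hu hv
    have hz : z ∉ P.support ∨ z ∉ Q.support := by
      by_contra! h
      rcases hPQ z h.1 h.2 with rfl | rfl
      exacts [hu.2 rfl, hv.2 rfl]
    have hvia : ∀ R : G.Walk u v, (∀ x ∈ R.support, x ∈ W) → z ∉ R.support →
        (G.induce (W \ {z})).Reachable ⟨u, hu⟩ ⟨v, hv⟩ := fun R hRW hz =>
      (R.induce (W \ {z}) fun x hx =>
        ⟨hRW x hx, fun hxz => hz (Set.mem_singleton_iff.mp hxz ▸ hx)⟩).reachable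
    rcases hz with hz | hz
    exacts [hvia P hPW hz, hvia Q hQW hz]
  intro a b
  rcases hend a with ⟨hu, ha⟩ | ⟨hv, ha⟩ <;>
    rcases hend b with ⟨hu', hb⟩ | ⟨hv', hb⟩
  · exact ha.symm.trans hb
  · exact ha.symm.trans ((huv hu hv').trans hb)
  · exact ha.symm.trans ((huv hu' hv).symm.trans hb)
  · exact ha.symm.trans hb

end SimpleGraph

section BlockGraph

variable {V : Type*} {G : SimpleGraph V}

lemma isCutFree_of_isClique {W : Set V} (hne : W.Nonempty) (hW : G.IsClique W) :
    IsCutFree G W := by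
  have hpre : ∀ T ⊆ W, (G.induce T).Preconnected := fun T hT =>
    induce_eq_top.mpr (hW.subset hT) ▸ preconnected_top
  exact ⟨hne, (connected_iff _).mpr ⟨hpre W subset_rfl, hne.to_subtype⟩,
    fun _ _ => hpre _ Set.sdiff_subset⟩

variable [Finite V]

lemma IsCutFree.exists_isBlock_superset {W : Set V} (hW : IsCutFree G W) :
    ∃ B, IsBlock G B ∧ W ⊆ B := by
  obtain ⟨B, hWB, hB⟩ := (Set.toFinite {B : Set V | IsCutFree G B}).exists_le_maximal hW
  exact ⟨B, ⟨hB.prop, fun B' hBB' hB' => hB.eq_of_ge hB' hBB'⟩, hWB⟩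

theorem adj_of_internallyDisjoint_walks (hblock : ∀ B, IsBlock G B → G.IsClique B)
    {u v : V} (huv : u ≠ v) (P Q : G.Walk u v)
    (hPQ : ∀ z ∈ P.support, z ∈ Q.support → z = u ∨ z = v) : G.Adj u v := by
  classical
  obtain ⟨B, hB, hWB⟩ := (Walk.isCutFree_support_union P.bypass_isPath Q.bypass_isPath
    fun z hzP hzQ => hPQ z (P.support_bypass_subset_support hzP)
      (Q.support_bypass_subset_support hzQ)).exists_isBlock_superset
  exact hblock B hB (hWB (Or.inl P.bypass.start_mem_support))
    (hWB (Or.inl P.bypass.end_mem_support)) huv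

theorem dist_le_of_triangle_of_dist_eq (hG : G.Connected)
    (hblock : ∀ B, IsBlock G B → G.IsClique B) {u v w : V} (huv : G.Adj u v) (huw : G.Adj u w)
    (hvw : G.Adj v w) {x : V} (hx : G.dist u x = G.dist v x) : G.dist w x ≤ G.dist u x := by
  obtain ⟨n, hn⟩ : ∃ n, G.dist u x = n := ⟨_, rfl⟩
  induction n using Nat.strong_induction_on generalizing x with
  | _ n ih =>
  by_contra! hlt
  obtain ⟨A, hA⟩ := hG.exists_walk_length_eq_dist u x
  obtain ⟨C, hC⟩ := hG.exists_walk_length_eq_dist v x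
  -- a common vertex `z ≠ x` of the shortest paths is equidistant from `u` and `v` and closer to
  -- `x`; without one, `w u ⋯ x` and `w v ⋯ x` meet only at their ends
  by_cases hmeet : ∃ z ∈ A.support, z ∈ C.support ∧ z ≠ x
  · obtain ⟨z, hzA, hzC, hzx⟩ := hmeet
    have huzx := A.dist_add_dist_of_mem_support hA hzA
    have hvzx := C.dist_add_dist_of_mem_support hC hzC
    have hzx := hG.pos_dist_of_ne hzx
    have hwz := ih (G.dist u z) (by omega) (x := z) (by omega) rfl
    have := hG.dist_triangle (u := w) (v := z) (w := x)
    omega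
  · push Not at hmeet
    have hwx : w ≠ x := by rintro rfl; simp at hlt
    have hadj := adj_of_internallyDisjoint_walks hblock hwx (A.cons huw.symm) (C.cons hvw.symm)
      fun z hzA hzC => by
        simp only [Walk.support_cons, List.mem_cons] at hzA hzC
        rcases hzA with rfl | hzA
        · exact .inl rfl
        rcases hzC with rfl | hzC
        · exact .inl rfl
        exact .inr (hmeet z hzA hzC)
    have hux : u = x := hG.dist_eq_zero_iff.mp (by have := dist_eq_one_iff_adj.mpr hadj; omega)
    have hvx : v = x := hG.dist_eq_zero_iff.mp (by rw [← hx, hux, dist_self])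
    exact huv.ne (hux.trans hvx.symm)

theorem dist_le_max_of_triangle (hG : G.Connected) (hblock : ∀ B, IsBlock G B → G.IsClique B)
    {u v w : V} (huv : G.Adj u v) (huw : G.Adj u w) (hvw : G.Adj v w) (x : V) :
    G.dist w x ≤ max (G.dist u x) (G.dist v x) := by
  rcases eq_or_ne (G.dist u x) (G.dist v x) with h | h
  · exact (dist_le_of_triangle_of_dist_eq hG hblock huv huw hvw h).trans (le_max_left _ _)
  · have := dist_eq_one_iff_adj.mpr huv
    have := dist_eq_one_iff_adj.mpr huv.symm
    have := dist_eq_one_iff_adj.mpr huw.symm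
    have := dist_eq_one_iff_adj.mpr hvw.symm
    have := hG.dist_triangle (u := w) (v := u) (w := x)
    have := hG.dist_triangle (u := w) (v := v) (w := x)
    have := hG.dist_triangle (u := u) (v := v) (w := x)
    have := hG.dist_triangle (u := v) (v := u) (w := x)
    rcases h.lt_or_gt with h | h
    · exact le_max_of_le_right (by omega)
    · exact le_max_of_le_left (by omega)

theorem dist_lt_of_adj_of_dist_eq_add_one (hG : G.Connected)
    (hblock : ∀ B, IsBlock G B → G.IsClique B) {u w v : V} (huw : G.Adj u w) (hwv : w ≠ v)
    (hd : G.dist u v = G.dist w v + 1) {x : V} (hx : G.dist u x ≤ G.dist w x) :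
    G.dist w x < G.dist v x := by
  obtain ⟨n, hn⟩ : ∃ n, G.dist u v = n := ⟨_, rfl⟩
  induction n using Nat.strong_induction_on generalizing v with
  | _ n ih =>
  by_contra! hvx
  obtain ⟨R, hR⟩ := hG.exists_walk_length_eq_dist w v
  obtain ⟨A, hA⟩ := hG.exists_walk_length_eq_dist u x
  obtain ⟨C, hC⟩ := hG.exists_walk_length_eq_dist v x
  have huw1 := dist_eq_one_iff_adj.mpr huw
  have hwv0 := hG.pos_dist_of_ne hwv
  have huv : u ≠ v := by rintro rfl; simp at hd
  have hnadj : ¬G.Adj u v := fun h => by have := dist_eq_one_iff_adj.mpr h; omega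
  -- `u w ⋯ v` and `u ⋯ x ⋯ v` would meet only at their ends: an inner common vertex `z` lies
  -- on the shortest `w`-`v` path, and either is too close to `x` or is a smaller instance
  refine hnadj (adj_of_internallyDisjoint_walks hblock huv (R.cons huw) (A.append C.reverse)
      fun z hzR hzAC => ?_)
  rw [Walk.support_cons, List.mem_cons] at hzR
  rcases hzR with rfl | hzR
  · exact .inl rfl
  have hwzv := R.dist_add_dist_of_mem_support hR hzR
  have huz : G.dist u z = G.dist w z + 1 := by
    have := hG.dist_triangle (u := u) (v := w) (w := z)
    have := hG.dist_triangle (u := u) (v := z) (w := v)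
    omega
  rw [Walk.mem_support_append_iff, Walk.support_reverse, List.mem_reverse] at hzAC
  rcases hzAC with hzA | hzC
  · have := A.dist_add_dist_of_mem_support hA hzA
    have := hG.dist_triangle (u := w) (v := z) (w := x)
    omega
  · refine .inr (by_contra fun hzv => ?_)
    have hvzx := C.dist_add_dist_of_mem_support hC hzC
    have hwz : w ≠ z := by
      rintro rfl
      rw [dist_comm] at hvzx
      omega
    have hzv0 := hG.pos_dist_of_ne hzv
    have := ih (G.dist u z) (by omega) hwz huz rfl
    omega

theorem dist_lt_max_of_adj_of_dist_eq_add_one (hG : G.Connected)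
    (hblock : ∀ B, IsBlock G B → G.IsClique B) {u w v : V} (huw : G.Adj u w) (hwv : w ≠ v)
    (hd : G.dist u v = G.dist w v + 1) (x : V) :
    G.dist w x < max (G.dist u x) (G.dist v x) := by
  rcases lt_or_ge (G.dist w x) (G.dist u x) with h | h
  · exact h.trans_le (le_max_left _ _)
  · exact (dist_lt_of_adj_of_dist_eq_add_one hG hblock huw hwv hd h).trans_le (le_max_right _ _)

end BlockGraph

section Center

variable {V : Type*} {G : SimpleGraph V} {S : Finset V} {v : V} {k : ℕ}

lemma dist_le_sEcc {x : V} (hx : x ∈ S) : G.dist v x ≤ sEcc G S v :=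
  Finset.le_sup (f := fun x => G.dist v x) hx

lemma sEcc_le_iff : sEcc G S v ≤ k ↔ ∀ x ∈ S, G.dist v x ≤ k :=
  Finset.sup_le_iff

lemma sEcc_lt_iff (hS : S.Nonempty) : sEcc G S v < k ↔ ∀ x ∈ S, G.dist v x < k := by
  obtain ⟨x, hx⟩ := hS
  refine ⟨fun h y hy => (dist_le_sEcc hy).trans_lt h, fun h => ?_⟩
  exact (Finset.sup_lt_iff ((Nat.zero_le _).trans_lt (h x hx))).mpr h

lemma sEcc_eq_of_mem_sCenter {a b : V} (ha : a ∈ sCenter G S) (hb : b ∈ sCenter G S) :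
    sEcc G S a = sEcc G S b :=
  (ha b).antisymm (hb a)

lemma sCenter_nonempty [Nonempty V] : (sCenter G S).Nonempty :=
  ⟨Function.argmin (sEcc G S), fun w => Function.argmin_le (sEcc G S) w⟩

lemma sCenter_singleton (hG : G.Connected) (v : V) : sCenter G {v} = {v} := by
  ext w
  simp only [sCenter, sEcc, Finset.sup_singleton, Set.mem_ofPred_eq, Set.mem_singleton_iff]
  refine ⟨fun h => hG.dist_eq_zero_iff.mp (Nat.le_zero.mp (by simpa using h v)), ?_⟩
  rintro rfl y
  simp

variable [Finite V]

/-- A center vertex `a` has no center vertex `b` at distance `≥ 2`: the neighbour of `a` on a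
shortest `a`-`b` path would have smaller eccentricity. -/
theorem isClique_sCenter (hG : G.Connected) (hblock : ∀ B, IsBlock G B → G.IsClique B)
    (hS : S.Nonempty) : G.IsClique (sCenter G S) := by
  intro a ha b hb hab
  by_contra hnadj
  obtain ⟨p, hp⟩ := hG.exists_walk_length_eq_dist a b
  cases p with
  | nil => exact hab rfl
  | @cons _ w _ haw q =>
    have hawb := (Walk.cons haw q).dist_add_dist_of_mem_support hp
      (z := w) (by simp)
    rw [dist_eq_one_iff_adj.mpr haw, add_comm] at hawb
    have hwb : w ≠ b := by rintro rfl; exact hnadj haw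
    have hlt : sEcc G S w < sEcc G S a := (sEcc_lt_iff hS).mpr fun x hx =>
      (dist_lt_max_of_adj_of_dist_eq_add_one hG hblock haw hwb hawb.symm x).trans_le
        (max_le (dist_le_sEcc hx) (sEcc_eq_of_mem_sCenter ha hb ▸ dist_le_sEcc hx))
    exact hlt.not_ge (ha w)

theorem isBlock_sCenter (hG : G.Connected) (hblock : ∀ B, IsBlock G B → G.IsClique B)
    (hS : S.Nonempty) (hC : (sCenter G S).Nontrivial) : IsBlock G (sCenter G S) := by
  obtain ⟨B, hB, hCB⟩ :=
    (isCutFree_of_isClique hC.nonempty (isClique_sCenter hG hblock hS)).exists_isBlock_superset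
  suffices B ⊆ sCenter G S from this.antisymm hCB ▸ hB
  intro w hwB
  obtain ⟨u, hu, v, hv, huv⟩ := hC
  by_cases hw : w = u ∨ w = v
  · rcases hw with rfl | rfl
    exacts [hu, hv]
  push Not at hw
  have hle : sEcc G S w ≤ sEcc G S u := sEcc_le_iff.mpr fun x hx =>
    (dist_le_max_of_triangle hG hblock (hblock B hB (hCB hu) (hCB hv) huv)
      (hblock B hB (hCB hu) hwB hw.1.symm) (hblock B hB (hCB hv) hwB hw.2.symm) x).trans
      (max_le (dist_le_sEcc hx) (sEcc_eq_of_mem_sCenter hu hv ▸ dist_le_sEcc hx))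
  exact fun y => hle.trans (hu y)

theorem sCenter_toFinset_of_isBlock (hG : G.Connected)
    (hblock : ∀ B, IsBlock G B → G.IsClique B) {B : Set V} (hB : IsBlock G B)
    (hBnt : B.Nontrivial) : sCenter G (Set.toFinite B).toFinset = B := by
  set S := (Set.toFinite B).toFinset
  have hmem : ∀ {x}, x ∈ S ↔ x ∈ B := Set.Finite.mem_toFinset _
  have hin : ∀ w ∈ B, sEcc G S w ≤ 1 := fun w hw => sEcc_le_iff.mpr fun x hx => by
    rcases eq_or_ne w x with rfl | hwx
    · simp
    · exact (dist_eq_one_iff_adj.mpr (hblock B hB hw (hmem.mp hx) hwx)).le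
  have hpos : ∀ w, 1 ≤ sEcc G S w := fun w => by
    obtain ⟨x, hx, hxw⟩ := hBnt.exists_ne w
    exact (hG.pos_dist_of_ne hxw.symm).trans_le (dist_le_sEcc (hmem.mpr hx))
  -- a vertex at distance `≤ 1` from all of `B` would extend the clique `B`
  have hout : ∀ w ∉ B, 2 ≤ sEcc G S w := by
    intro w hw
    by_contra! h
    have hadj : ∀ x ∈ B, w ≠ x → G.Adj w x := fun x hx hwx => dist_eq_one_iff_adj.mp
      (le_antisymm (by have := dist_le_sEcc (G := G) (v := w) (hmem.mpr hx); omega)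
        (hG.pos_dist_of_ne hwx))
    have := hB.2 _ (Set.subset_insert w B)
      (isCutFree_of_isClique (Set.insert_nonempty w B) ((hblock B hB).insert hadj))
    exact hw (this ▸ Set.mem_insert w B)
  ext w
  refine ⟨fun hw => by_contra fun hwB => ?_, fun hw y => (hin w hw).trans (hpos y)⟩
  obtain ⟨b, hb⟩ := hBnt.nonempty
  have := hw b
  have := hout w hwB
  have := hin b hb
  omega

end Center

/-- In a connected block graph (every block is complete), the center sets are exactly the
singletons and the vertex sets of the blocks. -/
theorem centerSets_of_blockGraph {V : Type*} [Fintype V] (G : SimpleGraph V)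
    (hG : G.Connected)
    (hblock : ∀ B : Set V, IsBlock G B → ∀ u ∈ B, ∀ v ∈ B, u ≠ v → G.Adj u v)
    (A : Set V) :
    IsCenterSet G A ↔ (∃ v : V, A = {v}) ∨ (∃ B : Set V, IsBlock G B ∧ A = B) := by
  constructor
  · rintro ⟨S, hS, rfl⟩
    have : Nonempty V := hS.elim fun x _ => ⟨x⟩
    exact sCenter_nonempty.exists_eq_singleton_or_nontrivial.imp_right
      fun hC => ⟨_, isBlock_sCenter hG hblock hS hC, rfl⟩
  · rintro (⟨v, rfl⟩ | ⟨B, hB, hAB⟩)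
    · exact ⟨{v}, Finset.singleton_nonempty v, sCenter_singleton hG v⟩
    · rw [hAB]
      rcases Set.subsingleton_or_nontrivial B with hsub | hnt
      · obtain ⟨v, hv⟩ := hB.1.1
        exact ⟨{v}, Finset.singleton_nonempty v, (sCenter_singleton hG v).trans
          (hsub.eq_singleton_of_mem hv).symm⟩
      · exact ⟨_, (Set.toFinite B).toFinset_nonempty.mpr hnt.nonempty,
          sCenter_toFinset_of_isBlock hG hblock hB hnt⟩
end

section
/- For every m with 1 ≤ m ≤ n, there exists a nonempty subset S of vertices of the odd cycle C_{2n+1} such that |C_S(C_{2n+1})| = m. -/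
/-!
In `C_{2n+1}` the distance from `v` to `v + k` is `min k (2n + 1 - k)`. So every `S`-eccentricity
is at most `n`, with equality iff `S` contains one of the two antipodes `v + n`, `v + n + 1`, and it
is at least `n - 1` as soon as `S` meets the window `v + n - 1, …, v + n + 2`. Hence, if `S` meets
every four consecutive vertices and misses two consecutive ones, the `S`-center is the translate
by `-n` of `{w | w ∉ S ∧ w + 1 ∉ S}`. For `S` the set of vertices that are `≥ 2m` or `≡ 3 (mod 4)`,
these `w` are the `w < 2m - 1` with `w ≡ 0, 1 (mod 4)`: exactly `m` of them.
-/

open SimpleGraph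
open scoped Fin.NatCast Fin.CommRing

lemma Fin.eq_natCast_iff_val_eq {N : ℕ} [NeZero N] {a : Fin N} {k : ℕ} (hk : k < N) :
    a = k ↔ a.val = k := by
  rw [Fin.ext_iff, Fin.val_natCast, Nat.mod_eq_of_lt hk]

namespace SimpleGraph

section cycleGraph

variable {N : ℕ} [NeZero N]

lemma cycleGraph_sub_eq_one_or_neg_one_of_adj {u v : Fin N} (h : (cycleGraph N).Adj u v) :
    v - u = 1 ∨ v - u = -1 := by
  have val_eq_one : ∀ x : Fin N, x.val = 1 → x = 1 := fun x hx =>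
    Fin.ext (by rw [hx, Fin.val_one', Nat.mod_eq_of_lt (hx ▸ x.isLt)])
  rcases cycleGraph_adj'.1 h with h | h
  · right
    rw [← neg_sub, val_eq_one _ h]
  · exact .inl (val_eq_one _ h)

lemma cycleGraph_dist_add_one_le (x : Fin N) : (cycleGraph N).dist x (x + 1) ≤ 1 := by
  by_cases h : x + 1 = x
  · simp [h]
  have hN : 1 < N := by
    by_contra! hN
    have := Fin.subsingleton_iff_le_one.2 hN
    exact h (Subsingleton.elim _ _)
  have hadj : (cycleGraph N).Adj x (x + 1) := cycleGraph_adj'.2 <| .inr <| by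
    rw [add_sub_cancel_left, Fin.val_one', Nat.mod_eq_of_lt hN]
  simpa using dist_le hadj.toWalk

lemma cycleGraph_dist_add_natCast_le (u : Fin N) (k : ℕ) :
    (cycleGraph N).dist u (u + k) ≤ k := by
  induction k with
  | zero => simp
  | succ k ih =>
    calc (cycleGraph N).dist u (u + (k + 1 : ℕ))
        ≤ (cycleGraph N).dist u (u + k) + (cycleGraph N).dist (u + k) (u + k + 1) := by
          rw [Nat.cast_succ, ← add_assoc]
          exact (cycleGraph_preconnected _ _).dist_triangle_left _
      _ ≤ k + 1 := add_le_add ih (cycleGraph_dist_add_one_le _)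

lemma cycleGraph_dist_le_val_sub (u v : Fin N) : (cycleGraph N).dist u v ≤ (v - u).val := by
  simpa using cycleGraph_dist_add_natCast_le u (v - u).val

lemma exists_intCast_eq_sub_of_walk {u v : Fin N} (p : (cycleGraph N).Walk u v) :
    ∃ z : ℤ, z.natAbs ≤ p.length ∧ (z : Fin N) = v - u := by
  induction p with
  | nil => exact ⟨0, by simp⟩
  | @cons u w v h _ ih =>
    obtain ⟨z, hz, hzv⟩ := ih
    have hv : v - u = (v - w) + (w - u) := by ring
    rcases cycleGraph_sub_eq_one_or_neg_one_of_adj h with h1 | h1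
    · exact ⟨z + 1, by simp only [Walk.length_cons]; omega, by push_cast; rw [hv, hzv, h1]⟩
    · exact ⟨z - 1, by simp only [Walk.length_cons]; omega, by push_cast; rw [hv, hzv, h1]; ring⟩

lemma min_val_intCast_val_neg_le_natAbs (z : ℤ) :
    min (z : Fin N).val (-(z : Fin N)).val ≤ z.natAbs := by
  obtain ⟨k, rfl | rfl⟩ := Int.eq_nat_or_neg z
  · calc _ ≤ ((k : ℤ) : Fin N).val := min_le_left _ _
      _ ≤ k := by rw [Int.cast_natCast, Fin.val_natCast]; exact Nat.mod_le _ _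
  · calc _ ≤ (-((-k : ℤ) : Fin N)).val := min_le_right _ _
      _ ≤ (-(k : ℤ)).natAbs := by
          rw [Int.cast_neg, neg_neg, Int.cast_natCast, Fin.val_natCast, Int.natAbs_neg,
            Int.natAbs_natCast]
          exact Nat.mod_le _ _

theorem cycleGraph_dist (u v : Fin N) :
    (cycleGraph N).dist u v = min (v - u).val (N - (v - u).val) := by
  have hneg : (u - v).val = if v - u = 0 then 0 else N - (v - u).val := by
    rw [← neg_sub, Fin.val_neg]
  suffices (cycleGraph N).dist u v = min (v - u).val (u - v).val by
    rw [this, hneg]; split_ifs with h <;> simp [h]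
  refine le_antisymm (le_min (cycleGraph_dist_le_val_sub u v) ?_) ?_
  · rw [dist_comm]
    exact cycleGraph_dist_le_val_sub v u
  · obtain ⟨p, hp⟩ := (cycleGraph_preconnected u v).exists_walk_length_eq_dist
    obtain ⟨z, hz, hzv⟩ := exists_intCast_eq_sub_of_walk p
    calc min (v - u).val (u - v).val = min (z : Fin N).val (-(z : Fin N)).val := by
          rw [hzv, neg_sub]
      _ ≤ z.natAbs := min_val_intCast_val_neg_le_natAbs z
      _ ≤ _ := hp ▸ hz

end cycleGraph

section oddCycle

variable {n : ℕ}

lemma cycleGraph_dist_le_half (v x : Fin (2 * n + 1)) : (cycleGraph (2 * n + 1)).dist v x ≤ n := by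
  rw [cycleGraph_dist]
  omega

lemma cycleGraph_dist_eq_half_iff (v x : Fin (2 * n + 1)) :
    (cycleGraph (2 * n + 1)).dist v x = n ↔ x = v + n ∨ x = v + n + 1 := by
  rcases Nat.eq_zero_or_pos n with rfl | hn
  · simp [Fin.fin_one_eq_zero x, Fin.fin_one_eq_zero v]
  have hcast : (n : Fin (2 * n + 1)) + 1 = (n + 1 : ℕ) := by push_cast; rfl
  rw [add_assoc, hcast, ← sub_eq_iff_eq_add', ← sub_eq_iff_eq_add',
    Fin.eq_natCast_iff_val_eq (by omega), Fin.eq_natCast_iff_val_eq (by omega),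
    cycleGraph_dist]
  omega

lemma le_cycleGraph_dist_add {j : ℕ} (hj : j ≤ 3) (v : Fin (2 * n + 1)) :
    n - 1 ≤ (cycleGraph (2 * n + 1)).dist v (v + (n - 1 + j : ℕ)) := by
  rcases le_or_gt n 1 with hn | hn
  · rw [Nat.sub_eq_zero_of_le hn]
    exact Nat.zero_le _
  rw [cycleGraph_dist, add_sub_cancel_left, Fin.val_natCast, Nat.mod_eq_of_lt (by omega)]
  omega

end oddCycle

end SimpleGraph

section sCenter

variable {V : Type*} {G : SimpleGraph V} {S : Finset V}

lemma sCenter_eq_setOf_sEcc_eq {k : ℕ} (hle : ∀ v, k ≤ sEcc G S v) (hk : ∃ v, sEcc G S v = k) :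
    sCenter G S = {v | sEcc G S v = k} := by
  obtain ⟨v₀, hv₀⟩ := hk
  ext v
  exact ⟨fun hv => le_antisymm (hv₀ ▸ hv v₀) (hle v), fun hv w => hv ▸ hle w⟩

end sCenter

section oddCycleCenter

variable {n : ℕ} {S : Finset (Fin (2 * n + 1))}

lemma sEcc_cycleGraph_le_half (S : Finset (Fin (2 * n + 1))) (v : Fin (2 * n + 1)) :
    sEcc (cycleGraph (2 * n + 1)) S v ≤ n :=
  Finset.sup_le fun x _ => cycleGraph_dist_le_half v x

lemma sEcc_cycleGraph_eq_half_iff (hS : S.Nonempty) (v : Fin (2 * n + 1)) :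
    sEcc (cycleGraph (2 * n + 1)) S v = n ↔ v + n ∈ S ∨ v + n + 1 ∈ S := by
  constructor
  · intro h
    obtain ⟨x, hx, hsup⟩ := S.exists_mem_eq_sup hS fun x => (cycleGraph (2 * n + 1)).dist v x
    rcases (cycleGraph_dist_eq_half_iff v x).1 (hsup ▸ h) with rfl | rfl
    exacts [.inl hx, .inr hx]
  · intro h
    obtain ⟨x, hx, hxv⟩ : ∃ x ∈ S, x = v + n ∨ x = v + n + 1 := by
      rcases h with h | h
      exacts [⟨_, h, .inl rfl⟩, ⟨_, h, .inr rfl⟩]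
    refine le_antisymm (sEcc_cycleGraph_le_half S v) ?_
    exact ((cycleGraph_dist_eq_half_iff v x).2 hxv).ge.trans (Finset.le_sup hx)

lemma le_sEcc_cycleGraph (hS : ∀ w, ∃ j ≤ (3 : ℕ), w + (j : Fin (2 * n + 1)) ∈ S)
    (v : Fin (2 * n + 1)) :
    n - 1 ≤ sEcc (cycleGraph (2 * n + 1)) S v := by
  obtain ⟨j, hj, hjS⟩ := hS (v + (n - 1 : ℕ))
  rw [add_assoc, ← Nat.cast_add] at hjS
  exact (le_cycleGraph_dist_add hj v).trans (Finset.le_sup hjS)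

theorem sCenter_cycleGraph_eq_preimage (hS : ∀ w, ∃ j ≤ (3 : ℕ), w + (j : Fin (2 * n + 1)) ∈ S)
    (hgap : {w | w ∉ S ∧ w + 1 ∉ S}.Nonempty) :
    sCenter (cycleGraph (2 * n + 1)) S =
      (· + (n : Fin (2 * n + 1))) ⁻¹' {w | w ∉ S ∧ w + 1 ∉ S} := by
  have hne : S.Nonempty := let ⟨_, _, hj⟩ := hS 0; ⟨_, hj⟩
  have hecc_ne : ∀ v, sEcc (cycleGraph (2 * n + 1)) S v ≠ n ↔ v + n ∉ S ∧ v + n + 1 ∉ S :=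
    fun v => by rw [ne_eq, sEcc_cycleGraph_eq_half_iff hne, not_or]
  obtain ⟨w, hw⟩ := hgap
  have hw_ne := (hecc_ne (w - n)).2 (by rwa [sub_add_cancel])
  have hw_le := sEcc_cycleGraph_le_half S (w - n)
  have hw_ge := le_sEcc_cycleGraph hS (w - n)
  rw [sCenter_eq_setOf_sEcc_eq (le_sEcc_cycleGraph hS) ⟨w - n, by omega⟩]
  ext v
  simp only [Set.mem_ofPred_eq, Set.mem_preimage, ← hecc_ne]
  have hv_le := sEcc_cycleGraph_le_half S v
  have hv_ge := le_sEcc_cycleGraph hS v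
  omega

end oddCycleCenter

def oddCycleWitness (n m : ℕ) : Finset (Fin (2 * n + 1)) :=
  {v | 2 * m ≤ v.val ∨ v.val % 4 = 3}

section oddCycleWitness

variable {n m : ℕ}

lemma exists_add_mem_oddCycleWitness (hmn : m ≤ n) (w : Fin (2 * n + 1)) :
    ∃ j ≤ (3 : ℕ), w + (j : Fin (2 * n + 1)) ∈ oddCycleWitness n m := by
  have val_add : ∀ j, w.val + j < 2 * n + 1 → (w + (j : Fin (2 * n + 1))).val = w.val + j :=
    fun j hj => by
      rw [Fin.val_add, Fin.val_natCast, Nat.mod_eq_of_lt (show j < 2 * n + 1 by omega),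
        Nat.mod_eq_of_lt hj]
  simp only [oddCycleWitness, Finset.mem_filter, Finset.mem_univ, true_and]
  rcases le_or_gt (w.val + 3) (2 * n) with h | h
  · refine ⟨3 - w.val % 4, by omega, .inr ?_⟩
    rw [val_add _ (by omega)]
    omega
  · refine ⟨2 * n - w.val, by omega, .inl ?_⟩
    rw [val_add _ (by omega)]
    omega

lemma ncard_setOf_notMem_oddCycleWitness (hmn : m ≤ n) :
    {w : Fin (2 * n + 1) | w ∉ oddCycleWitness n m ∧ w + 1 ∉ oddCycleWitness n m}.ncard = m := by
  -- `k ↦ k + 2 * (k / 2)` enumerates `0, 1, 4, 5, 8, 9, …`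
  have hgaps : {w : Fin (2 * n + 1) | w ∉ oddCycleWitness n m ∧ w + 1 ∉ oddCycleWitness n m} =
      Fin.val ⁻¹' ((fun k => k + 2 * (k / 2)) '' Set.Iio m) := by
    ext w
    simp only [oddCycleWitness, Finset.mem_filter, Finset.mem_univ, true_and, Fin.val_add_one,
      Set.mem_ofPred_eq, Set.mem_preimage, Set.mem_image, Set.mem_Iio]
    split_ifs with hw
    · simp only [hw, Fin.val_last]
      omega
    · constructor
      · intro h
        exact ⟨w.val - 2 * (w.val / 4), by omega, by omega⟩
      · rintro ⟨k, hk, hkw⟩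
        omega
  rw [hgaps, Set.ncard_preimage_of_injective_subset_range Fin.val_injective,
    Set.ncard_image_of_injective _ (StrictMono.injective fun a b hab => by omega),
    Set.ncard_Iio_nat]
  rintro _ ⟨k, hk, rfl⟩
  exact ⟨⟨_, by rw [Set.mem_Iio] at hk; omega⟩, rfl⟩

end oddCycleWitness

/-- For every `m` with `1 ≤ m ≤ n` there is a nonempty set `S` of vertices of the odd
cycle `C_{2n+1}` whose `S`-center has exactly `m` vertices. -/
theorem exists_centerSet_card_oddCycle (n m : ℕ) (hm : 1 ≤ m) (hmn : m ≤ n) :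
    ∃ S : Finset (Fin (2 * n + 1)), S.Nonempty ∧
      (sCenter (SimpleGraph.cycleGraph (2 * n + 1)) S).ncard = m := by
  have hwindows := exists_add_mem_oddCycleWitness hmn
  have hgaps := ncard_setOf_notMem_oddCycleWitness hmn
  refine ⟨oddCycleWitness n m, ?_, ?_⟩
  · obtain ⟨j, -, hj⟩ := hwindows 0
    exact ⟨_, hj⟩
  · rw [sCenter_cycleGraph_eq_preimage hwindows (Set.nonempty_of_ncard_ne_zero (by omega)),
      Set.ncard_preimage_of_injective_subset_range (add_left_injective (n : Fin (2 * n + 1)))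
        fun w _ => ⟨w - n, sub_add_cancel w (n : Fin (2 * n + 1))⟩, hgaps]
end
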